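/- Let μ > 0, n ∈ ℕ, and 0 ≤ k ≤ n. Then the integral I_{n,k} := (n+1) ∫₀¹ p_{n,k}(a_{n+1}(x)) dx satisfies I_{n,k} ≤ 1 + 1/((n+1)(1+μ)). -/

import Mathlib

open MeasureTheory Filter Set

/-- The logarithmic weight `ln_μ(x) = ln(1+μ+x)`. -/
noncomputable def lnMu (μ x : ℝ) : ℝ := Real.log (1 + μ + x)

/-- The function `a_{n+1}(x)` from the paper. -/
noncomputable def aFun (μ : ℝ) (n : ℕ) (x : ℝ) : ℝ :=
  Real.log (1 + x / (((n : ℝ) + 1) * (1 + μ))) /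
    Real.log (1 + 1 / (((n : ℝ) + 1) * (1 + μ)))

/-- Bernstein basis polynomial `p_{n,k}(x) = C(n,k) x^k (1-x)^{n-k}`. -/
noncomputable def bern (n k : ℕ) (x : ℝ) : ℝ :=
  (n.choose k : ℝ) * x ^ k * (1 - x) ^ (n - k)

/-- The Kantorovich logarithmic operator `𝓛ₙᴷ(f,x)`. -/
noncomputable def LK (μ : ℝ) (n : ℕ) (f : ℝ → ℝ) (x : ℝ) : ℝ :=
  lnMu μ x * ∑ k ∈ Finset.range (n + 1),
    bern n k (aFun μ n x) * ((n : ℝ) + 1) *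
      ∫ t in ((k : ℝ) / ((n : ℝ) + 1))..(((k : ℝ) + 1) / ((n : ℝ) + 1)), f t / lnMu μ t

/-- `γ_n := max_{x ∈ [0,1]} |a_{n+1}(x) - x|`. -/
noncomputable def gammaN (μ : ℝ) (n : ℕ) : ℝ :=
  ⨆ x : Set.Icc (0 : ℝ) 1, |aFun μ n (x : ℝ) - (x : ℝ)|

/-- Unweighted L^p norm `(∫₀¹ |f|^p)^(1/p)` on [0,1]. -/
noncomputable def normP (p : ℝ) (f : ℝ → ℝ) : ℝ :=
  (∫ x in (0:ℝ)..1, |f x| ^ p) ^ (1 / p)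

/-- Weighted L^p norm `(∫₀¹ |f/ln_μ|^p)^(1/p)` on [0,1]. -/
noncomputable def normPMu (μ p : ℝ) (f : ℝ → ℝ) : ℝ :=
  (∫ x in (0:ℝ)..1, |f x / lnMu μ x| ^ p) ^ (1 / p)
/-!
Substituting `x = c (exp (u L) - 1)`, with `c = (n + 1) (1 + μ)` and `L = log (1 + 1 / c)`, inverts
`a_{n+1}` and turns the integral into `∫₀¹ p_{n,k}(u) · c L e^{u L} du`. On `[0, 1]` the Jacobian
is at most `c L e^L = c L (1 + 1 / c) ≤ 1 + 1 / c`, because `log (1 + t) ≤ t`, and the Bernstein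
polynomial integrates to `1 / (n + 1)` by the Beta integral.
-/

open scoped Nat

theorem integral_pow_mul_one_sub_pow (k m : ℕ) :
    ∫ x in (0:ℝ)..1, x ^ k * (1 - x) ^ m = (k ! * m ! : ℝ) / (k + m + 1)! := by
  have hbeta := Complex.betaIntegral_eq_Gamma_mul_div (k + 1) (m + 1)
    (by norm_cast; positivity) (by norm_cast; positivity)
  rw [show (k + 1 + (m + 1) : ℂ) = (k + m + 1 : ℕ) + 1 by push_cast; ring,
    Complex.Gamma_nat_eq_factorial, Complex.Gamma_nat_eq_factorial,
    Complex.Gamma_nat_eq_factorial, Complex.betaIntegral] at hbeta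
  simp only [add_sub_cancel_right, Complex.cpow_natCast] at hbeta
  apply Complex.ofReal_injective
  rw [← intervalIntegral.integral_ofReal]
  push_cast
  exact hbeta

theorem continuous_bern (n k : ℕ) : Continuous (bern n k) := by
  unfold bern
  fun_prop

theorem bern_nonneg (n k : ℕ) {x : ℝ} (hx : x ∈ Icc (0 : ℝ) 1) : 0 ≤ bern n k x := by
  have hx₀ : 0 ≤ x := hx.1
  have hx₁ : 0 ≤ 1 - x := sub_nonneg.2 hx.2
  unfold bern
  positivity

theorem integral_bern {n k : ℕ} (hk : k ≤ n) :
    ∫ x in (0:ℝ)..1, bern n k x = 1 / ((n : ℝ) + 1) := by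
  have hfact : (n.choose k * (k ! * (n - k)!) : ℝ) = n ! := by
    exact_mod_cast (mul_assoc _ _ _).symm.trans (Nat.choose_mul_factorial_mul_factorial hk)
  simp only [bern, mul_assoc]
  rw [intervalIntegral.integral_const_mul, integral_pow_mul_one_sub_pow,
    show k + (n - k) + 1 = n + 1 by omega, Nat.factorial_succ, ← mul_div_assoc, hfact]
  push_cast
  field_simp

noncomputable def logScale (c x : ℝ) : ℝ :=
  Real.log (1 + x / c) / Real.log (1 + 1 / c)

noncomputable def expScale (c u : ℝ) : ℝ :=
  c * (Real.exp (u * Real.log (1 + 1 / c)) - 1)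

section Scale

variable {c : ℝ}

theorem log_one_add_inv_pos (hc : 0 < c) : 0 < Real.log (1 + 1 / c) :=
  Real.log_pos (by simp [hc])

theorem mul_log_one_add_inv_le (hc : 0 < c) : c * Real.log (1 + 1 / c) ≤ 1 := by
  calc c * Real.log (1 + 1 / c) ≤ c * (1 / c) := by
        gcongr
        linarith [Real.log_le_sub_one_of_pos (show 0 < 1 + 1 / c by positivity)]
    _ = 1 := by field_simp

theorem mul_log_one_add_inv_mul_exp_le (hc : 0 < c) {u : ℝ} (hu : u ≤ 1) :
    c * Real.log (1 + 1 / c) * Real.exp (u * Real.log (1 + 1 / c)) ≤ 1 + 1 / c := by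
  have hL := log_one_add_inv_pos hc
  calc c * Real.log (1 + 1 / c) * Real.exp (u * Real.log (1 + 1 / c))
      ≤ 1 * Real.exp (1 * Real.log (1 + 1 / c)) := by
        gcongr
        exact mul_log_one_add_inv_le hc
    _ = 1 + 1 / c := by rw [one_mul, one_mul, Real.exp_log (by positivity)]

theorem logScale_expScale (hc : 0 < c) (u : ℝ) : logScale c (expScale c u) = u := by
  rw [logScale, expScale, mul_div_cancel_left₀ _ hc.ne', add_sub_cancel, Real.log_exp,
    mul_div_cancel_right₀ _ (log_one_add_inv_pos hc).ne']

theorem expScale_zero (c : ℝ) : expScale c 0 = 0 := by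
  simp [expScale]

theorem expScale_one (hc : 0 < c) : expScale c 1 = 1 := by
  rw [expScale, one_mul, Real.exp_log (by positivity)]
  field_simp
  ring

theorem hasDerivAt_expScale (c u : ℝ) :
    HasDerivAt (expScale c)
      (c * Real.log (1 + 1 / c) * Real.exp (u * Real.log (1 + 1 / c))) u := by
  have := (((hasDerivAt_id u).mul_const (Real.log (1 + 1 / c))).exp.sub_const 1).const_mul c
  exact this.congr_deriv (by simp only [id]; ring)

theorem monotone_expScale (hc : 0 < c) : Monotone (expScale c) := fun _ _ h => by
  unfold expScale
  gcongr
  exact (log_one_add_inv_pos hc).le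

theorem mapsTo_expScale (hc : 0 < c) : MapsTo (expScale c) (Icc 0 1) (Icc 0 1) := fun _ hu =>
  ⟨expScale_zero c ▸ monotone_expScale hc hu.1, expScale_one hc ▸ monotone_expScale hc hu.2⟩

theorem continuousOn_logScale (hc : 0 < c) : ContinuousOn (logScale c) (Icc 0 1) := by
  refine (ContinuousOn.log (by fun_prop) fun x hx => ?_).div_const _
  have : 0 ≤ x / c := div_nonneg hx.1 hc.le
  positivity

theorem integral_comp_logScale (hc : 0 < c) {f : ℝ → ℝ} (hf : ContinuousOn f (Icc 0 1)) :
    ∫ x in (0:ℝ)..1, f (logScale c x) =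
      ∫ u in (0:ℝ)..1,
        f u * (c * Real.log (1 + 1 / c) * Real.exp (u * Real.log (1 + 1 / c))) := by
  have himage : expScale c '' uIcc 0 1 ⊆ Icc 0 1 := by
    rw [image_subset_iff, uIcc_of_le zero_le_one]
    exact mapsTo_expScale hc
  have hlogScale : MapsTo (logScale c) (expScale c '' uIcc 0 1) (Icc 0 1) := by
    rintro _ ⟨u, hu, rfl⟩
    rwa [logScale_expScale hc, ← uIcc_of_le zero_le_one]
  have hsubst := intervalIntegral.integral_comp_mul_deriv' (a := 0) (b := 1)
    (fun u _ => hasDerivAt_expScale c u) (by fun_prop)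
    (hf.comp ((continuousOn_logScale hc).mono himage) hlogScale)
  simp only [expScale_zero, expScale_one hc, Function.comp_def, logScale_expScale hc] at hsubst
  exact hsubst.symm

theorem integral_comp_logScale_le (hc : 0 < c) {f : ℝ → ℝ} (hf : ContinuousOn f (Icc 0 1))
    (hf0 : ∀ u ∈ Icc (0 : ℝ) 1, 0 ≤ f u) :
    ∫ x in (0:ℝ)..1, f (logScale c x) ≤ (1 + 1 / c) * ∫ u in (0:ℝ)..1, f u := by
  have hf' : ContinuousOn f (uIcc 0 1) := by rwa [uIcc_of_le zero_le_one]
  rw [integral_comp_logScale hc hf, ← intervalIntegral.integral_const_mul]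
  refine intervalIntegral.integral_mono_on zero_le_one
    ((hf'.mul (by fun_prop)).intervalIntegrable) (hf'.intervalIntegrable.const_mul _)
    fun u hu => ?_
  rw [mul_comm (1 + 1 / c)]
  exact mul_le_mul_of_nonneg_left (mul_log_one_add_inv_mul_exp_le hc hu.2) (hf0 u hu)

end Scale

theorem aFun_eq_logScale (μ : ℝ) (n : ℕ) : aFun μ n = logScale (((n : ℝ) + 1) * (1 + μ)) := rfl

theorem stmt9 (μ : ℝ) (hμ : 0 < μ) (n k : ℕ) (hk : k ≤ n) :
    ((n : ℝ) + 1) * ∫ x in (0:ℝ)..1, bern n k (aFun μ n x) ≤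
      1 + 1 / (((n : ℝ) + 1) * (1 + μ)) := by
  have hc : 0 < ((n : ℝ) + 1) * (1 + μ) := by positivity
  have hbound := integral_comp_logScale_le hc (continuous_bern n k).continuousOn
    (fun _ hx => bern_nonneg n k hx)
  rw [← aFun_eq_logScale, integral_bern hk] at hbound
  calc ((n : ℝ) + 1) * ∫ x in (0:ℝ)..1, bern n k (aFun μ n x)
      ≤ ((n : ℝ) + 1) * ((1 + 1 / (((n : ℝ) + 1) * (1 + μ))) * (1 / ((n : ℝ) + 1))) := by
        gcongr
    _ = 1 + 1 / (((n : ℝ) + 1) * (1 + μ)) := by field_simp
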